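/- arXiv:1602.02293 — 2 statements merged into one kernel-verified Lean document; each statement's English description precedes it below -/
import Mathlib

section
/- Let G = (V,E,w) be a weighted undirected graph, let A ⊆ V be a set of vertices, and let u, v ∈ V be such that d_G(u,v) < d_G(v,A). Then every vertex y on a shortest path in G between u and v satisfies d_G(y,u) < d_G(y,A); that is, every vertex on the shortest path also belongs to the cluster of u. -/
/-- Every vertex on a shortest path from `u` to a cluster member `v` is itself
in the cluster `C(u) = {x : d(u,x) < d(x,A)}`. -/
theorem stmt_0 {V : Type*} (d : V → V → ℝ) (A : Set V) (hA : A.Nonempty)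
    (hnonneg : ∀ x y, 0 ≤ d x y)
    (hsymm : ∀ x y, d x y = d y x)
    (htri : ∀ x y z, d x z ≤ d x y + d y z)
    (u v y : V)
    (hpath : d u y + d y v = d u v)
    (hcluster : d u v < sInf (d v '' A)) :
    d y u < sInf (d y '' A) := by
  have key : sInf (d v '' A) - d y v ≤ sInf (d y '' A) := by
    apply le_csInf (hA.image _)
    rintro _ ⟨a, ha, rfl⟩
    have hva : sInf (d v '' A) ≤ d v a := csInf_le ⟨0, by rintro _ ⟨b, hb, rfl⟩; exact hnonneg _ _⟩ ⟨a, ha, rfl⟩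
    have := htri v y a
    linarith [hsymm v y]
  have : d u y < sInf (d v '' A) - d y v := by linarith
  rw [hsymm]
  linarith
end

section
/- Let k ≥ 1 be an integer, ε = 1/(48·k^4), y_0 ≥ 0, and define x_i by x_0 = 0, x_i = (1+ε)(2+10ε)·y_0 + (1+ε)(1+10ε)·x_{i-1}. Then for every 0 ≤ i ≤ k-1, x_i ≤ (2+13ε)·y_0·(i + 1/(4k^2)). -/
set_option maxHeartbeats 1000000


theorem stmt_8 (k : ℕ) (hk : 1 ≤ k) (ε : ℝ) (hε : ε = 1 / (48 * (k : ℝ) ^ 4))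
    (y0 : ℝ) (hy0 : 0 ≤ y0)
    (x : ℕ → ℝ) (hx0 : x 0 = 0)
    (hx : ∀ i : ℕ, 1 ≤ i →
      x i = (1 + ε) * (2 + 10 * ε) * y0 + (1 + ε) * (1 + 10 * ε) * x (i - 1)) :
    ∀ i : ℕ, i ≤ k - 1 →
      x i ≤ (2 + 13 * ε) * y0 * ((i : ℝ) + 1 / (4 * (k : ℝ) ^ 2)) := by
  have hk' : (1:ℝ) ≤ (k:ℝ) := by exact_mod_cast hk
  have hk2 : (1:ℝ) ≤ (k:ℝ)^2 := by nlinarith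
  have hk4 : (1:ℝ) ≤ (k:ℝ)^4 := by nlinarith
  have hε0 : 0 < ε := by rw [hε]; positivity
  have hεk : ε * (48 * (k:ℝ)^4) = 1 := by
    rw [hε]; field_simp
  have hεle : ε ≤ 1/48 := by
    have h := mul_le_mul_of_nonneg_left hk4 hε0.le
    linarith
  have hcast : ∀ i : ℕ, i ≤ k - 1 → (i:ℝ) ≤ (k:ℝ) - 1 := by
    intro i hi
    have h : i + 1 ≤ k := by omega
    have h' : (i:ℝ) + 1 ≤ (k:ℝ) := by exact_mod_cast h
    linarith
  have hC : 0 ≤ (2 + 13*ε) * y0 := by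
    apply mul_nonneg _ hy0; linarith
  have key : ∀ i : ℕ, i ≤ k - 1 →
      x i ≤ (2 + 13*ε) * y0 * ((i:ℝ) + 12*ε*(i:ℝ)^2) := by
    intro i
    induction i with
    | zero => intro _; simp [hx0]
    | succ j ih =>
      intro hle
      have hjle : j ≤ k - 1 := le_trans (Nat.le_succ j) hle
      have ihj := ih hjle
      have hrec := hx (j+1) (by omega)
      simp only [Nat.add_sub_cancel] at hrec
      have hjk : (j:ℝ) ≤ (k:ℝ) - 1 := hcast j hjle
      have hj0 : (0:ℝ) ≤ (j:ℝ) := Nat.cast_nonneg j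
      have hjk2 : (j:ℝ)^2 ≤ (k:ℝ)^2 := by nlinarith
      have hjk4 : (j:ℝ)^2 ≤ (k:ℝ)^4 := by nlinarith
      have hsmall : 12*ε*(j:ℝ)^2 ≤ 1 := by
        have h := mul_le_mul_of_nonneg_left hjk4 hε0.le
        linarith
      have hB : 0 ≤ (1 + ε) * (1 + 10 * ε) := by nlinarith
      set C := (2 + 13*ε) * y0 with hCdef
      set T := (j:ℝ) + 12*ε*(j:ℝ)^2 with hTdef
      have hT0 : 0 ≤ T := by positivity
      have hCT : 0 ≤ C * T := mul_nonneg hC hT0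
      have step1 : (1 + ε) * (2 + 10 * ε) * y0 ≤ C := by
        rw [hCdef]
        have h := mul_nonneg (mul_nonneg hy0 hε0.le) (show (0:ℝ) ≤ 1 - 10*ε by linarith)
        linarith [h, hεk]
      have step2 : (1 + ε) * (1 + 10 * ε) ≤ 1 + 12*ε := by
        have h := mul_nonneg hε0.le (show (0:ℝ) ≤ 1 - 10*ε by linarith)
        linarith [h, hεk]
      have step3 : (1 + ε) * (1 + 10 * ε) * x j ≤ (1 + 12*ε) * (C * T) :=
        le_trans (mul_le_mul_of_nonneg_left ihj hB)
          (mul_le_mul_of_nonneg_right step2 hCT)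
      have h144 : 144*ε^2*(j:ℝ)^2 ≤ 12*ε := by
        have h := mul_le_mul_of_nonneg_left hsmall hε0.le
        linarith [h, hεk]
      have hεj : 0 ≤ ε * (j:ℝ) := mul_nonneg hε0.le hj0
      have inner : 1 + (1 + 12*ε) * T ≤ ((j:ℝ) + 1) + 12*ε*((j:ℝ)+1)^2 := by
        rw [hTdef]
        linarith [h144, hεj]
      have step4 : C * (1 + (1 + 12*ε) * T) ≤ C * (((j:ℝ)+1) + 12*ε*((j:ℝ)+1)^2) :=
        mul_le_mul_of_nonneg_left inner hC
      rw [hrec]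
      push_cast
      calc (1 + ε) * (2 + 10 * ε) * y0 + (1 + ε) * (1 + 10 * ε) * x j
          ≤ C + (1 + 12*ε) * (C * T) := add_le_add step1 step3
        _ = C * (1 + (1 + 12*ε) * T) := by ring
        _ ≤ C * (((j:ℝ)+1) + 12*ε*((j:ℝ)+1)^2) := step4
  intro i hi
  have h1 := key i hi
  have hik : (i:ℝ) ≤ (k:ℝ) - 1 := hcast i hi
  have hi0 : (0:ℝ) ≤ (i:ℝ) := Nat.cast_nonneg i
  have h2 : 12*ε*(i:ℝ)^2 ≤ 1 / (4*(k:ℝ)^2) := by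
    rw [le_div_iff₀ (by positivity : (0:ℝ) < 4*(k:ℝ)^2)]
    have hik2 : (i:ℝ)^2 ≤ (k:ℝ)^2 := by nlinarith
    have hik4 : (i:ℝ)^2 * (k:ℝ)^2 ≤ (k:ℝ)^4 := by
      have h' := mul_le_mul_of_nonneg_right hik2 (sq_nonneg (k:ℝ))
      linarith [h']
    have h := mul_le_mul_of_nonneg_left hik4 hε0.le
    linarith [h, hεk]
  have h3 : (2 + 13*ε) * y0 * ((i:ℝ) + 12*ε*(i:ℝ)^2) ≤
      (2 + 13*ε) * y0 * ((i:ℝ) + 1/(4*(k:ℝ)^2)) :=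
    mul_le_mul_of_nonneg_left (by linarith) hC
  linarith
end
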